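/- arXiv:1802.09658 — 2 statements merged into one kernel-verified Lean document; each statement's English description precedes it below -/
import Mathlib

section
/- For every positive integer n and every real ε > 0, there exists a positive integer k₀ = k₀(ε, n) such that for every nonempty compact convex set Δ contained in the unit cube [0,1]^n and every integer k ≥ k₀, one has |#(kΔ ∩ ℤ^n)/k^n − vol(Δ)| ≤ ε. -/
/-!
Place a unit cube `p + [0,1)ⁿ` at every lattice point `p` of `K = kΔ`. These cubes are disjoint,
so their union has volume `#(K ∩ ℤⁿ)`; it lies inside the Minkowski sum `K + [0,1]ⁿ` and contains
the erosion `{x | x - [0,1]ⁿ ⊆ K}`. Now `[0,1]ⁿ` is the sum of the `n` unit segments along the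
axes. Adding one such segment to a convex body, or eroding by it, changes every line slice in that
direction (an interval) by length at most `1`, and only the slices over the shadow `[0, k+1]ⁿ⁻¹`
are nonempty; by Fubini each of the `n` steps changes the volume by at most `(k+1)ⁿ⁻¹`. Hence
`|#(kΔ ∩ ℤⁿ) - kⁿ vol Δ| ≤ n (k+1)ⁿ⁻¹`, which is `o(kⁿ)` uniformly in `Δ`.
-/

open Pointwise MeasureTheory Set

section Erosion

variable {E : Type*} [AddCommGroup E]

def erosion (K S : Set E) : Set E := {x | ∀ s ∈ S, x - s ∈ K}

variable {K S T : Set E}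

@[simp]
lemma erosion_singleton_zero (K : Set E) : erosion K {0} = K := by
  ext x; simp [erosion]

lemma erosion_subset (h : (0 : E) ∈ S) : erosion K S ⊆ K :=
  fun x hx => by simpa using hx 0 h

lemma erosion_anti (h : S ⊆ T) : erosion K T ⊆ erosion K S :=
  fun _ hx s hs => hx s (h hs)

lemma erosion_add (K S T : Set E) : erosion K (S + T) = erosion (erosion K S) T := by
  ext x
  constructor
  · intro h t ht s hs
    simpa [sub_sub, add_comm] using h (s + t) (add_mem_add hs ht)
  · rintro h _ ⟨s, hs, t, ht, rfl⟩
    simpa [sub_sub, add_comm] using h t ht s hs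

lemma Convex.erosion [Module ℝ E] (hK : Convex ℝ K) : Convex ℝ (erosion K S) := by
  intro x hx y hy a b ha hb hab s hs
  convert hK (hx s hs) (hy s hs) ha hb hab using 1
  rw [smul_sub, smul_sub, sub_add_sub_comm, ← add_smul, hab, one_smul]

lemma IsClosed.erosion [TopologicalSpace E] [IsTopologicalAddGroup E] (hK : IsClosed K) :
    IsClosed (erosion K S) := by
  simp only [_root_.erosion, ofPred_forall]
  exact isClosed_biInter fun s _ => hK.preimage (continuous_sub_right s)

end Erosion

section Interval

lemma volume_add_Icc_zero_one_le {F : Set ℝ} (hF : IsCompact F) (hconv : Convex ℝ F) :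
    volume (F + Icc 0 1) ≤ volume F + 1 := by
  rcases F.eq_empty_or_nonempty with rfl | hne
  · simp
  rw [eq_Icc_of_connected_compact ⟨hne, hconv.isPreconnected⟩ hF]
  set a := sInf F
  set b := sSup F
  calc volume (Icc a b + Icc 0 1) ≤ volume (Icc (a + 0) (b + 1)) :=
        measure_mono (Icc_add_Icc_subset _ _ _ _)
    _ = ENNReal.ofReal ((b - a) + 1) := by rw [Real.volume_Icc]; ring_nf
    _ ≤ volume (Icc a b) + 1 := by
        rw [Real.volume_Icc, ← ENNReal.ofReal_one]; exact ENNReal.ofReal_add_le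

lemma volume_le_volume_erosion_Icc_zero_one_add {F : Set ℝ} (hF : IsCompact F)
    (hconv : Convex ℝ F) : volume F ≤ volume (erosion F (Icc 0 1)) + 1 := by
  rcases F.eq_empty_or_nonempty with rfl | hne
  · simp
  rw [eq_Icc_of_connected_compact ⟨hne, hconv.isPreconnected⟩ hF]
  set a := sInf F
  set b := sSup F
  have hsub : Icc (a + 1) b ⊆ erosion (Icc a b) (Icc 0 1) :=
    fun t ht u hu => ⟨by linarith [ht.1, hu.2], by linarith [ht.2, hu.1]⟩
  calc volume (Icc a b) = ENNReal.ofReal ((b - (a + 1)) + 1) := by rw [Real.volume_Icc]; ring_nf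
    _ ≤ volume (Icc (a + 1) b) + 1 := by
        rw [Real.volume_Icc, ← ENNReal.ofReal_one]; exact ENNReal.ofReal_add_le
    _ ≤ volume (erosion (Icc a b) (Icc 0 1)) + 1 := by gcongr

end Interval

section LineSlice

variable {E : Type*} [AddCommGroup E] [Module ℝ E]

def lineSlice (K : Set E) (x v : E) : Set ℝ := {t | x + t • v ∈ K}

variable {K : Set E}

lemma lineSlice_add_segment (K : Set E) (x v : E) :
    lineSlice (K + (· • v) '' Icc (0 : ℝ) 1) x v = lineSlice K x v + Icc 0 1 := by
  ext t
  simp only [lineSlice, mem_ofPred_eq, mem_add, mem_image]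
  constructor
  · rintro ⟨k, hk, _, ⟨u, hu, rfl⟩, hku⟩
    refine ⟨t - u, ?_, u, hu, sub_add_cancel t u⟩
    rwa [sub_smul, ← add_sub_assoc, ← hku, add_sub_cancel_right]
  · rintro ⟨s, hs, u, hu, rfl⟩
    exact ⟨_, hs, _, ⟨u, hu, rfl⟩, by rw [add_smul, add_assoc]⟩

lemma lineSlice_erosion_segment (K : Set E) (x v : E) :
    lineSlice (erosion K ((· • v) '' Icc (0 : ℝ) 1)) x v = erosion (lineSlice K x v) (Icc 0 1) := by
  ext t
  simp only [lineSlice, erosion, mem_ofPred_eq, forall_mem_image, sub_smul, add_sub_assoc]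

lemma Convex.lineSlice (hK : Convex ℝ K) (x v : E) : Convex ℝ (lineSlice K x v) := by
  intro s hs t ht a b ha hb hab
  change x + (a * s + b * t) • v ∈ K
  convert hK hs ht ha hb hab using 1
  rw [smul_add, smul_add, add_add_add_comm, ← add_smul, hab, one_smul, add_smul, mul_smul,
    mul_smul]

lemma IsCompact.lineSlice [TopologicalSpace E] [IsTopologicalAddGroup E] [ContinuousSMul ℝ E]
    [T2Space E] (hK : IsCompact K) (x : E) {v : E} (hv : v ≠ 0) :
    IsCompact (_root_.lineSlice K x v) :=
  ((Homeomorph.addLeft x).isClosedEmbedding.comp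
    (isClosedEmbedding_smul_left hv)).isCompact_preimage hK

end LineSlice

section Coordinates

variable {m : ℕ}

lemma Fin.insertNth_eq_add_smul_single (i : Fin (m + 1)) (t : ℝ) (y : Fin m → ℝ) :
    (i.insertNth t y : Fin (m + 1) → ℝ) = i.insertNth 0 y + t • Pi.single i 1 := by
  refine funext (Fin.succAboveCases i ?_ fun j => ?_) <;> simp

lemma volume_eq_lintegral_lineSlice {A : Set (Fin (m + 1) → ℝ)} (hA : MeasurableSet A)
    (i : Fin (m + 1)) :
    volume A = ∫⁻ y : Fin m → ℝ, volume (lineSlice A (i.insertNth 0 y) (Pi.single i 1)) := by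
  let e := MeasurableEquiv.piFinSuccAbove (fun _ : Fin (m + 1) => ℝ) i
  have he : MeasurePreserving e volume (volume.prod volume) := by
    simpa only [volume_pi] using
      measurePreserving_piFinSuccAbove (fun _ : Fin (m + 1) => (volume : Measure ℝ)) i
  rw [← he.symm.measure_preimage hA.nullMeasurableSet,
    Measure.prod_apply_symm (e.symm.measurable hA)]
  refine lintegral_congr fun y => congrArg volume (ext fun t => ?_)
  simp [lineSlice, e, MeasurableEquiv.piFinSuccAbove_symm_apply, Fin.insertNthEquiv,
    ← Fin.insertNth_eq_add_smul_single]

lemma volume_le_add_of_lineSlice_le {A B : Set (Fin (m + 1) → ℝ)} (hA : MeasurableSet A)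
    (hB : MeasurableSet B) (i : Fin (m + 1)) {T : Set (Fin m → ℝ)} (hT : MeasurableSet T)
    (h : ∀ y, volume (lineSlice A (i.insertNth 0 y) (Pi.single i 1)) ≤
      volume (lineSlice B (i.insertNth 0 y) (Pi.single i 1)) + T.indicator 1 y) :
    volume A ≤ volume B + volume T := by
  rw [volume_eq_lintegral_lineSlice hA i, volume_eq_lintegral_lineSlice hB i,
    ← lintegral_indicator_one hT, ← lintegral_add_right _ (measurable_one.indicator hT)]
  exact lintegral_mono h

lemma mem_Icc_of_lineSlice_nonempty {K : Set (Fin (m + 1) → ℝ)} {c : ℝ}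
    (hK : K ⊆ Icc 0 fun _ => c) {i : Fin (m + 1)} {y : Fin m → ℝ}
    (h : (lineSlice K (i.insertNth 0 y) (Pi.single i 1)).Nonempty) :
    y ∈ Icc 0 fun _ => c := by
  obtain ⟨t, ht⟩ := h
  have hmem := hK (show (i.insertNth t y : Fin (m + 1) → ℝ) ∈ K by
    rwa [Fin.insertNth_eq_add_smul_single])
  exact ⟨fun j => by simpa using hmem.1 (i.succAbove j),
    fun j => by simpa using hmem.2 (i.succAbove j)⟩

variable {K : Set (Fin (m + 1) → ℝ)} {c : ℝ}

lemma volume_add_segment_single_le (hK : IsCompact K) (hconv : Convex ℝ K)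
    (hsub : K ⊆ Icc 0 fun _ => c) (i : Fin (m + 1)) :
    volume (K + (· • Pi.single i 1) '' Icc (0 : ℝ) 1) ≤ volume K + ENNReal.ofReal c ^ m := by
  have hseg : IsCompact ((· • Pi.single i (1 : ℝ)) '' Icc (0 : ℝ) 1) :=
    isCompact_Icc.image (continuous_id.smul continuous_const)
  calc _ ≤ volume K + volume (Icc (0 : Fin m → ℝ) fun _ => c) :=
        volume_le_add_of_lineSlice_le (hK.add hseg).measurableSet hK.measurableSet i
          measurableSet_Icc fun y => ?_
    _ = _ := by simp [Real.volume_Icc_pi]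
  rw [lineSlice_add_segment]
  rcases (lineSlice K (i.insertNth 0 y) (Pi.single i 1)).eq_empty_or_nonempty with he | hne
  · simp [he]
  rw [indicator_of_mem (mem_Icc_of_lineSlice_nonempty hsub hne), Pi.one_apply]
  exact volume_add_Icc_zero_one_le (hK.lineSlice _ (by simp)) (hconv.lineSlice _ _)

lemma volume_le_volume_erosion_segment_single_add (hK : IsCompact K) (hconv : Convex ℝ K)
    (hsub : K ⊆ Icc 0 fun _ => c) (i : Fin (m + 1)) :
    volume K ≤
      volume (erosion K ((· • Pi.single i 1) '' Icc (0 : ℝ) 1)) + ENNReal.ofReal c ^ m := by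
  calc _ ≤ volume (erosion K ((· • Pi.single i 1) '' Icc (0 : ℝ) 1)) +
        volume (Icc (0 : Fin m → ℝ) fun _ => c) :=
        volume_le_add_of_lineSlice_le hK.measurableSet hK.isClosed.erosion.measurableSet i
          measurableSet_Icc fun y => ?_
    _ = _ := by simp [Real.volume_Icc_pi]
  rw [lineSlice_erosion_segment]
  rcases (lineSlice K (i.insertNth 0 y) (Pi.single i 1)).eq_empty_or_nonempty with he | hne
  · simp [he]
  rw [indicator_of_mem (mem_Icc_of_lineSlice_nonempty hsub hne), Pi.one_apply]
  exact volume_le_volume_erosion_Icc_zero_one_add (hK.lineSlice _ (by simp)) (hconv.lineSlice _ _)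

end Coordinates

section UnitBox

variable {ι : Type*}

def unitBox (s : Finset ι) : Set (ι → ℝ) := Icc 0 ((s : Set ι).indicator 1)

@[simp]
lemma unitBox_empty : unitBox (∅ : Finset ι) = {0} := by
  simp [unitBox, Pi.zero_def]

lemma unitBox_univ [Fintype ι] : unitBox (Finset.univ : Finset ι) = Icc 0 1 := by
  simp [unitBox]

lemma zero_mem_unitBox (s : Finset ι) : (0 : ι → ℝ) ∈ unitBox s :=
  left_mem_Icc.2 (indicator_nonneg fun _ _ => zero_le_one)

lemma unitBox_subset_Icc (s : Finset ι) : unitBox s ⊆ Icc 0 1 :=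
  Icc_subset_Icc le_rfl (indicator_le_self' fun _ _ => zero_le_one)

lemma add_unitBox_subset_Icc {K : Set (ι → ℝ)} {c : ℝ} (hsub : K ⊆ Icc 0 fun _ => c) (s : Finset ι) :
    K + unitBox s ⊆ Icc 0 fun _ => c + 1 := by
  rintro _ ⟨x, hx, b, hb, rfl⟩
  have hb' := unitBox_subset_Icc s hb
  exact ⟨fun i => add_nonneg ((hsub hx).1 i) (hb'.1 i),
    fun i => add_le_add ((hsub hx).2 i) (hb'.2 i)⟩

lemma unitBox_insert_subset [DecidableEq ι] (i : ι) (s : Finset ι) :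
    unitBox (insert i s) ⊆ unitBox s + (· • Pi.single i 1) '' Icc (0 : ℝ) 1 := by
  intro x hx
  refine ⟨Function.update x i 0, ⟨fun j => ?_, fun j => ?_⟩, _,
    ⟨x i, ⟨hx.1 i, by simpa using hx.2 i⟩, rfl⟩, funext fun j => ?_⟩
  · rcases eq_or_ne j i with rfl | hj
    · simp
    · simpa [hj] using hx.1 j
  · rcases eq_or_ne j i with rfl | hj
    · simpa using (zero_mem_unitBox s).2 j
    · simpa [indicator_apply, hj] using hx.2 j
  · rcases eq_or_ne j i with rfl | hj <;> simp [*]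

end UnitBox

section Chains

variable {n : ℕ} {K : Set (Fin n → ℝ)} {c : ℝ}

lemma volume_add_unitBox_le (hK : IsCompact K) (hconv : Convex ℝ K)
    (hsub : K ⊆ Icc 0 fun _ => c) (s : Finset (Fin n)) :
    volume (K + unitBox s) ≤ volume K + s.card * ENNReal.ofReal (c + 1) ^ (n - 1) := by
  classical
  induction s using Finset.induction_on with
  | empty => simp
  | insert i s hi ih =>
    obtain ⟨m, rfl⟩ : ∃ m, n = m + 1 := ⟨n - 1, (Nat.succ_pred_eq_of_pos i.pos).symm⟩
    calc volume (K + unitBox (insert i s))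
        ≤ volume (K + unitBox s + (· • Pi.single i 1) '' Icc (0 : ℝ) 1) :=
          measure_mono (by rw [add_assoc]; exact add_subset_add_left (unitBox_insert_subset i s))
      _ ≤ volume (K + unitBox s) + ENNReal.ofReal (c + 1) ^ m :=
          volume_add_segment_single_le (hK.add isCompact_Icc) (hconv.add (convex_Icc _ _))
            (add_unitBox_subset_Icc hsub s) i
      _ ≤ volume K + s.card * ENNReal.ofReal (c + 1) ^ m + ENNReal.ofReal (c + 1) ^ m := by
          gcongr
          simpa using ih
      _ = _ := by rw [Finset.card_insert_of_notMem hi]; push_cast; ring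

lemma volume_le_volume_erosion_unitBox_add (hK : IsCompact K) (hconv : Convex ℝ K)
    (hsub : K ⊆ Icc 0 fun _ => c) (s : Finset (Fin n)) :
    volume K ≤ volume (erosion K (unitBox s)) + s.card * ENNReal.ofReal c ^ (n - 1) := by
  classical
  induction s using Finset.induction_on with
  | empty => simp
  | insert i s hi ih =>
    obtain ⟨m, rfl⟩ : ∃ m, n = m + 1 := ⟨n - 1, (Nat.succ_pred_eq_of_pos i.pos).symm⟩
    have hE : erosion K (unitBox s) ⊆ K := erosion_subset (zero_mem_unitBox s)
    calc volume K ≤ volume (erosion K (unitBox s)) + s.card * ENNReal.ofReal c ^ m := by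
          simpa using ih
      _ ≤ volume (erosion (erosion K (unitBox s)) ((· • Pi.single i 1) '' Icc (0 : ℝ) 1)) +
            ENNReal.ofReal c ^ m + s.card * ENNReal.ofReal c ^ m := by
          gcongr
          exact volume_le_volume_erosion_segment_single_add
            (hK.of_isClosed_subset hK.isClosed.erosion hE) hconv.erosion (hE.trans hsub) i
      _ ≤ volume (erosion K (unitBox (insert i s))) +
            ENNReal.ofReal c ^ m + s.card * ENNReal.ofReal c ^ m := by
          rw [← erosion_add]
          gcongr
          exact erosion_anti (unitBox_insert_subset i s)
      _ = _ := by rw [Finset.card_insert_of_notMem hi]; push_cast; ring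

end Chains

section Lattice

variable {ι : Type*}

def latticePoints (K : Set (ι → ℝ)) : Set (ι → ℤ) := {p | (fun i => (p i : ℝ)) ∈ K}

def unitCube (p : ι → ℤ) : Set (ι → ℝ) := univ.pi fun i => Ico (p i : ℝ) (p i + 1)

lemma mem_unitCube {p : ι → ℤ} {x : ι → ℝ} : x ∈ unitCube p ↔ ∀ i, ⌊x i⌋ = p i := by
  simp [unitCube, Int.floor_eq_iff]

lemma volume_biUnion_unitCube [Fintype ι] (P : Set (ι → ℤ)) :
    volume (⋃ p ∈ P, unitCube p) = P.encard := by
  have hdisj : P.PairwiseDisjoint unitCube := fun p _ q _ hpq => disjoint_left.2 fun x hp hq =>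
    hpq (funext fun i => (mem_unitCube.1 hp i).symm.trans (mem_unitCube.1 hq i))
  rw [measure_biUnion P.to_countable hdisj fun p _ => .univ_pi fun i => measurableSet_Ico]
  simp [unitCube, Real.volume_pi_Ico]

lemma biUnion_unitCube_subset_add (K : Set (ι → ℝ)) :
    ⋃ p ∈ latticePoints K, unitCube p ⊆ K + Icc 0 1 := by
  simp only [iUnion_subset_iff]
  intro p hp x hx
  refine ⟨_, hp, fun i => Int.fract (x i),
    ⟨fun i => Int.fract_nonneg _, fun i => (Int.fract_lt_one _).le⟩, funext fun i => ?_⟩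
  simp [← mem_unitCube.1 hx i, Int.floor_add_fract]

lemma erosion_subset_biUnion_unitCube (K : Set (ι → ℝ)) :
    erosion K (Icc 0 1) ⊆ ⋃ p ∈ latticePoints K, unitCube p := by
  intro x hx
  refine mem_biUnion (x := fun i => ⌊x i⌋) ?_ (mem_unitCube.2 fun _ => rfl)
  have hfloor : (x - fun i => Int.fract (x i)) = fun i => (⌊x i⌋ : ℝ) :=
    funext fun i => Int.self_sub_fract (x i)
  simpa [latticePoints, hfloor] using
    hx (fun i => Int.fract (x i)) ⟨fun i => Int.fract_nonneg _, fun i => (Int.fract_lt_one _).le⟩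

end Lattice

section Sandwich

variable {n : ℕ} {K : Set (Fin n → ℝ)} {c : ℝ}

lemma encard_latticePoints_le (hK : IsCompact K) (hconv : Convex ℝ K)
    (hsub : K ⊆ Icc 0 fun _ => c) :
    ((latticePoints K).encard : ENNReal) ≤ volume K + n * ENNReal.ofReal (c + 1) ^ (n - 1) := by
  rw [← volume_biUnion_unitCube]
  calc _ ≤ volume (K + unitBox Finset.univ) := by
        rw [unitBox_univ]; exact measure_mono (biUnion_unitCube_subset_add K)
    _ ≤ _ := by simpa using volume_add_unitBox_le hK hconv hsub Finset.univ

lemma volume_le_encard_latticePoints_add (hK : IsCompact K) (hconv : Convex ℝ K)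
    (hsub : K ⊆ Icc 0 fun _ => c) :
    volume K ≤ (latticePoints K).encard + n * ENNReal.ofReal c ^ (n - 1) := by
  rw [← volume_biUnion_unitCube]
  calc _ ≤ volume (erosion K (unitBox Finset.univ)) + n * ENNReal.ofReal c ^ (n - 1) := by
        simpa using volume_le_volume_erosion_unitBox_add hK hconv hsub Finset.univ
    _ ≤ _ := by
        rw [unitBox_univ]; gcongr; exact erosion_subset_biUnion_unitCube K

lemma abs_ncard_latticePoints_sub_volume_le (hK : IsCompact K) (hconv : Convex ℝ K)
    (hc : 0 ≤ c) (hsub : K ⊆ Icc 0 fun _ => c) :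
    |((latticePoints K).ncard : ℝ) - (volume K).toReal| ≤ n * (c + 1) ^ (n - 1) := by
  set D : ENNReal := n * ENNReal.ofReal (c + 1) ^ (n - 1)
  have hD : D ≠ ⊤ := by finiteness
  have hDr : D.toReal = n * (c + 1) ^ (n - 1) := by
    simp [D, ENNReal.toReal_ofReal (by linarith : 0 ≤ c + 1)]
  have hvol : volume K ≠ ⊤ := hK.measure_lt_top.ne
  have hup : ((latticePoints K).encard : ENNReal) ≤ volume K + D :=
    encard_latticePoints_le hK hconv hsub
  have hfin : (latticePoints K).Finite :=
    Set.encard_ne_top_iff.1 fun h => by simp [h, hvol, hD] at hup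
  have hdown : volume K ≤ (latticePoints K).ncard + D := by
    refine (volume_le_encard_latticePoints_add hK hconv hsub).trans ?_
    rw [← hfin.cast_ncard_eq, ENat.toENNReal_coe]
    simp only [D]
    gcongr
    linarith
  rw [← hfin.cast_ncard_eq, ENat.toENNReal_coe] at hup
  rw [abs_le, ← hDr, neg_le_sub_iff_le_add, sub_le_iff_le_add']
  constructor
  · calc (volume K).toReal ≤ ((latticePoints K).ncard + D : ENNReal).toReal :=
          ENNReal.toReal_mono (by finiteness) hdown
      _ = _ := by rw [ENNReal.toReal_add (by finiteness) hD, ENNReal.toReal_natCast, add_comm]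
  · calc ((latticePoints K).ncard : ℝ) = ((latticePoints K).ncard : ENNReal).toReal :=
          (ENNReal.toReal_natCast _).symm
      _ ≤ (volume K + D).toReal := ENNReal.toReal_mono (by finiteness) hup
      _ = _ := ENNReal.toReal_add hvol hD

end Sandwich

lemma natCast_mul_add_one_pow_pred_div_pow_le (n : ℕ) {k : ℝ} (hk : 1 ≤ k) :
    n * (k + 1) ^ (n - 1) / k ^ n ≤ n * 2 ^ (n - 1) / k := by
  rcases n with _ | m
  · simp
  rw [div_le_div_iff₀ (by positivity) (by positivity)]
  calc ((m + 1 : ℕ) : ℝ) * (k + 1) ^ (m + 1 - 1) * k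
      ≤ (m + 1 : ℕ) * (2 * k) ^ m * k := by simp only [add_tsub_cancel_right]; gcongr; linarith
    _ = (m + 1 : ℕ) * 2 ^ (m + 1 - 1) * k ^ (m + 1) := by simp only [add_tsub_cancel_right]; ring

lemma smul_subset_Icc_const {ι : Type*} {Δ : Set (ι → ℝ)} (hsub : Δ ⊆ Icc 0 1) {k : ℝ}
    (hk : 0 ≤ k) : k • Δ ⊆ Icc 0 fun _ => k := by
  rintro _ ⟨x, hx, rfl⟩
  exact ⟨fun i => mul_nonneg hk ((hsub hx).1 i),
    fun i => by simpa using mul_le_of_le_one_right hk ((hsub hx).2 i)⟩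

theorem statement_0_general (n : ℕ) (ε : ℝ) (hε : 0 < ε) :
    ∃ k₀ : ℕ, 0 < k₀ ∧
      ∀ Δ : Set (Fin n → ℝ), Δ.Nonempty → IsCompact Δ → Convex ℝ Δ →
        Δ ⊆ Set.Icc (0 : Fin n → ℝ) 1 →
        ∀ k : ℕ, k₀ ≤ k →
          |({p : Fin n → ℤ | (fun i => (p i : ℝ)) ∈ (k : ℝ) • Δ}.ncard : ℝ) / (k : ℝ) ^ n -
              (volume Δ).toReal| ≤ ε := by
  refine ⟨⌈n * 2 ^ (n - 1) / ε⌉₊ + 1, Nat.succ_pos _, fun Δ _ hcomp hconv hsub k hk => ?_⟩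
  have hkε : n * 2 ^ (n - 1) / ε ≤ k :=
    (Nat.le_ceil _).trans (by exact_mod_cast (Nat.le_succ _).trans hk)
  have hk1 : (1 : ℝ) ≤ k := by exact_mod_cast (Nat.succ_le_succ (Nat.zero_le _)).trans hk
  have hcount := abs_ncard_latticePoints_sub_volume_le (hcomp.smul (k : ℝ)) (hconv.smul _)
    k.cast_nonneg (smul_subset_Icc_const hsub k.cast_nonneg)
  rw [Measure.addHaar_smul_of_nonneg _ k.cast_nonneg, Module.finrank_fin_fun, ENNReal.toReal_mul,
    ENNReal.toReal_ofReal (by positivity)] at hcount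
  have hkn : (0 : ℝ) < k ^ n := by positivity
  rw [← mul_div_cancel_left₀ (volume Δ).toReal hkn.ne', ← sub_div, abs_div, abs_of_pos hkn]
  calc _ ≤ (n : ℝ) * (k + 1) ^ (n - 1) / k ^ n := by gcongr; exact hcount
    _ ≤ (n : ℝ) * 2 ^ (n - 1) / k := natCast_mul_add_one_pow_pred_div_pow_le n hk1
    _ ≤ ε := by rwa [div_le_iff₀ (by linarith), ← div_le_iff₀' hε]

/-- **Asymptotic lattice point counting in convex bodies**: for every positive integer `n` and
every `ε > 0` there exists `k₀ = k₀(ε, n)` such that for every nonempty compact convex body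
`Δ ⊆ [0,1]^n` and every integer `k ≥ k₀`, the number of integer lattice points in the dilation
`kΔ`, divided by `k^n`, differs from the volume of `Δ` by at most `ε`. -/
theorem statement_0 (n : ℕ) (hn : 0 < n) (ε : ℝ) (hε : 0 < ε) :
    ∃ k₀ : ℕ, 0 < k₀ ∧
      ∀ Δ : Set (Fin n → ℝ), Δ.Nonempty → IsCompact Δ → Convex ℝ Δ →
        Δ ⊆ Set.Icc (0 : Fin n → ℝ) 1 →
        ∀ k : ℕ, k₀ ≤ k →
          |({p : Fin n → ℤ | (fun i => (p i : ℝ)) ∈ (k : ℝ) • Δ}.ncard : ℝ) / (k : ℝ) ^ n -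
              (volume Δ).toReal| ≤ ε :=
  statement_0_general n ε hε
end

section
/- Let B → A be a homomorphism of commutative rings, let I ⊆ A be an ideal, and let M be an A-module. Assume that M is flat as a B-module and that for every m ≥ 0 the quotient I^m M / I^{m+1} M is flat as a B-module. Then for every B-module N and every m ≥ 0, the natural map (I^m M / I^{m+1} M) ⊗_B N → I^m (M ⊗_B N) / I^{m+1} (M ⊗_B N) is an isomorphism of B-modules; equivalently, (gr_I M) ⊗_B N ≅ gr_I (M ⊗_B N). -/
/-!
Tensoring `0 → I^{k+1} M → I^k M → gr_k M → 0` with `N` stays exact on the left because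
`gr_k M` is flat, so by induction from `I^0 M = M` every map `I^k M ⊗ N → M ⊗ N` is injective;
its image is `I^k (M ⊗ N)`. Hence `gr_m M ⊗ N` and `I^m (M ⊗ N) / I^{m+1} (M ⊗ N)` are both the
cokernel of `I^{m+1} M ⊗ N → I^m M ⊗ N`.
-/

open TensorProduct LinearMap Function

section Exact

variable {R Q P Y Z : Type*} [CommRing R] [AddCommGroup Q] [AddCommGroup P] [AddCommGroup Y]
  [AddCommGroup Z] [Module R Q] [Module R P] [Module R Y] [Module R Z]

lemma Function.Exact.of_comp_of_injective {j : Q →ₗ[R] P} {ι : P →ₗ[R] Y} {π : Y →ₗ[R] Z}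
    (hι : Injective ι) (h : Exact (ι ∘ₗ j) π) : Exact j (π ∘ₗ ι) := by
  rw [exact_iff, ker_comp, h.linearMap_ker_eq, range_comp,
    Submodule.comap_map_eq_of_injective hι]

lemma Function.Exact.codRestrict {j : Q →ₗ[R] P} {g : P →ₗ[R] Z} (h : Exact j g)
    (S : Submodule R Z) (hg : ∀ x, g x ∈ S) : Exact j (g.codRestrict S hg) :=
  fun y => Subtype.ext_iff.trans (h y)

lemma Function.Exact.exists_linearEquiv_comp_eq {Z' : Type*} [AddCommGroup Z'] [Module R Z']
    {j : Q →ₗ[R] P} {g : P →ₗ[R] Z} {g' : P →ₗ[R] Z'} (h : Exact j g) (hg : Surjective g)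
    (h' : Exact j g') (hg' : Surjective g') : ∃ e : Z ≃ₗ[R] Z', ∀ x, e (g x) = g' x :=
  ⟨(h.linearEquivOfSurjective hg).symm ≪≫ₗ h'.linearEquivOfSurjective hg', fun x => by
    rw [LinearEquiv.trans_apply, linearEquivOfSurjective_symm_apply]; rfl⟩

end Exact

lemma Submodule.exact_inclusion_mkQ {R M : Type*} [Ring R] [AddCommGroup M] [Module R M]
    {p q : Submodule R M} (h : q ≤ p) : Exact (inclusion h) (comap p.subtype q).mkQ := by
  rw [exact_iff, ker_mkQ, range_inclusion]

section IdealSMul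

variable {B A : Type*} [CommRing B] [CommRing A] [Algebra B A]
  {M : Type*} [AddCommGroup M] [Module A M] [Module B M] [IsScalarTower B A M]
  (N : Type*) [AddCommGroup N] [Module B N]

lemma rTensor_subtype_injective_of_eq_top (p : Submodule A M) (hp : p = ⊤) :
    Injective (rTensor N (p.subtype.restrictScalars B)) := by
  have hbij : Bijective (p.subtype.restrictScalars B) :=
    ⟨p.injective_subtype, by rw [coe_restrictScalars, ← range_eq_top, Submodule.range_subtype, hp]⟩
  exact (LinearEquiv.ofBijective (p.subtype.restrictScalars B) hbij).rTensor N |>.injective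

lemma rTensor_inclusion_injective_of_flat {p q : Submodule A M} (h : q ≤ p)
    [Module.Flat B (p ⧸ Submodule.comap p.subtype q)] :
    Injective (rTensor N ((Submodule.inclusion h).restrictScalars B)) := by
  have hexact : Exact ((Submodule.inclusion h).restrictScalars B)
      ((Submodule.comap p.subtype q).mkQ.restrictScalars B) :=
    Submodule.exact_inclusion_mkQ h
  have hsurj : Surjective ((Submodule.comap p.subtype q).mkQ.restrictScalars B) :=
    (Submodule.comap p.subtype q).mkQ_surjective
  have hinj : Injective ((Submodule.inclusion h).restrictScalars B) :=
    Submodule.inclusion_injective h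
  rw [← lTensor_inj_iff_rTensor_inj]
  exact lTensor_injective_of_exact_of_flat _ hsurj _ hinj hexact N

lemma tmul_mem_smul_top {J : Ideal A} {x : M} (hx : x ∈ J • (⊤ : Submodule A M)) (n : N) :
    x ⊗ₜ[B] n ∈ J • (⊤ : Submodule A (M ⊗[B] N)) := by
  induction hx using Submodule.smul_induction_on' with
  | smul a ha y => rw [← smul_tmul']; exact Submodule.smul_mem_smul ha Submodule.mem_top
  | add y _ z _ hy hz => rw [add_tmul]; exact add_mem hy hz

lemma range_rTensor_smul_top_subtype (J : Ideal A) :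
    range (rTensor N ((J • (⊤ : Submodule A M)).subtype.restrictScalars B)) =
      (J • (⊤ : Submodule A (M ⊗[B] N))).restrictScalars B := by
  apply le_antisymm
  · rintro _ ⟨y, rfl⟩
    induction y using TensorProduct.induction_on with
    | zero => rw [map_zero]; exact zero_mem _
    | tmul p n => exact tmul_mem_smul_top N p.2 n
    | add u v hu hv => rw [map_add]; exact add_mem hu hv
  · intro x (hx : x ∈ J • (⊤ : Submodule A (M ⊗[B] N)))
    induction hx using Submodule.smul_induction_on' with
    | smul a ha t =>
      induction t using TensorProduct.induction_on with
      | zero => rw [smul_zero]; exact zero_mem _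
      | tmul y n =>
        exact ⟨⟨a • y, Submodule.smul_mem_smul ha Submodule.mem_top⟩ ⊗ₜ n, smul_tmul' a y n⟩
      | add t u ht hu => rw [smul_add]; exact add_mem (ht trivial) (hu trivial)
    | add y _ z _ hy hz => exact add_mem hy hz

lemma rTensor_pow_smul_top_subtype_injective (I : Ideal A)
    (hgr : ∀ k : ℕ, Module.Flat B (↥(I ^ k • (⊤ : Submodule A M)) ⧸
      Submodule.comap (I ^ k • (⊤ : Submodule A M)).subtype (I ^ (k + 1) • (⊤ : Submodule A M))))
    (k : ℕ) : Injective (rTensor N ((I ^ k • (⊤ : Submodule A M)).subtype.restrictScalars B)) := by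
  induction k with
  | zero =>
    refine rTensor_subtype_injective_of_eq_top N _ ?_
    rw [pow_zero, Ideal.one_eq_top, Submodule.top_smul]
  | succ k ih =>
    have hle : I ^ (k + 1) • (⊤ : Submodule A M) ≤ I ^ k • ⊤ :=
      Submodule.smul_mono_left (Ideal.pow_le_pow_right k.le_succ)
    have := hgr k
    have hcomp : (I ^ (k + 1) • (⊤ : Submodule A M)).subtype.restrictScalars B =
        (I ^ k • (⊤ : Submodule A M)).subtype.restrictScalars B ∘ₗ
          (Submodule.inclusion hle).restrictScalars B := rfl
    rw [hcomp, rTensor_comp, coe_comp]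
    exact ih.comp (rTensor_inclusion_injective_of_flat N hle)

lemma exact_rTensor_inclusion_mkQ_comp_rTensor_subtype {J J' : Ideal A} (h : J' ≤ J)
    (hinj : Injective (rTensor N ((J • (⊤ : Submodule A M)).subtype.restrictScalars B))) :
    Exact (rTensor N ((Submodule.inclusion (Submodule.smul_mono_left h :
        J' • (⊤ : Submodule A M) ≤ J • ⊤)).restrictScalars B))
      ((J' • (⊤ : Submodule A (M ⊗[B] N))).mkQ.restrictScalars B ∘ₗ
        rTensor N ((J • (⊤ : Submodule A M)).subtype.restrictScalars B)) := by
  refine Exact.of_comp_of_injective hinj ?_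
  rw [← rTensor_comp]
  change Exact (rTensor N ((J' • (⊤ : Submodule A M)).subtype.restrictScalars B)) _
  rw [exact_iff, range_rTensor_smul_top_subtype, ker_restrictScalars, Submodule.ker_mkQ]

lemma range_mkQ_comp_rTensor_subtype (J J' : Ideal A) :
    range ((J' • (⊤ : Submodule A (M ⊗[B] N))).mkQ.restrictScalars B ∘ₗ
        rTensor N ((J • (⊤ : Submodule A M)).subtype.restrictScalars B)) =
      (Submodule.map (J' • (⊤ : Submodule A (M ⊗[B] N))).mkQ (J • ⊤)).restrictScalars B := by
  rw [range_comp, range_rTensor_smul_top_subtype]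
  rfl

end IdealSMul

theorem statement_4_general (B A : Type*) [CommRing B] [CommRing A] [Algebra B A]
    (I : Ideal A) (M : Type*) [AddCommGroup M] [Module A M] [Module B M]
    [IsScalarTower B A M]
    (hgr : ∀ m : ℕ, Module.Flat B
      (↥(I ^ m • (⊤ : Submodule A M)) ⧸
        Submodule.comap (I ^ m • (⊤ : Submodule A M)).subtype
          (I ^ (m + 1) • (⊤ : Submodule A M))))
    (N : Type*) [AddCommGroup N] [Module B N] (m : ℕ) :
    ∃ e : ((↥(I ^ m • (⊤ : Submodule A M)) ⧸
          Submodule.comap (I ^ m • (⊤ : Submodule A M)).subtype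
            (I ^ (m + 1) • (⊤ : Submodule A M))) ⊗[B] N) ≃ₗ[B]
        ↥(Submodule.map (I ^ (m + 1) • (⊤ : Submodule A (M ⊗[B] N))).mkQ
            (I ^ m • (⊤ : Submodule A (M ⊗[B] N)))),
      ∀ (p : ↥(I ^ m • (⊤ : Submodule A M))) (ν : N),
        (↑(e ((Submodule.Quotient.mk p) ⊗ₜ[B] ν)) :
            (M ⊗[B] N) ⧸ I ^ (m + 1) • (⊤ : Submodule A (M ⊗[B] N))) =
          (I ^ (m + 1) • (⊤ : Submodule A (M ⊗[B] N))).mkQ ((↑p : M) ⊗ₜ[B] ν) := by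
  have hI : I ^ (m + 1) ≤ I ^ m := Ideal.pow_le_pow_right m.le_succ
  have hle : I ^ (m + 1) • (⊤ : Submodule A M) ≤ I ^ m • ⊤ := Submodule.smul_mono_left hI
  let K := Submodule.comap (I ^ m • ⊤ : Submodule A M).subtype (I ^ (m + 1) • ⊤)
  have hK : Surjective (K.mkQ.restrictScalars B) := K.mkQ_surjective
  have hexact_gr : Exact (rTensor N ((Submodule.inclusion hle).restrictScalars B))
      (rTensor N (K.mkQ.restrictScalars B)) :=
    rTensor_exact N (Submodule.exact_inclusion_mkQ hle) hK
  have hexact := exact_rTensor_inclusion_mkQ_comp_rTensor_subtype (M := M) N hI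
    (rTensor_pow_smul_top_subtype_injective N I hgr m)
  obtain ⟨e, he⟩ := hexact_gr.exists_linearEquiv_comp_eq (rTensor_surjective N hK)
    (hexact.codRestrict _ (mem_range_self _)) (surjective_rangeRestrict _)
  exact ⟨e ≪≫ₗ LinearEquiv.ofEq _ _ (range_mkQ_comp_rTensor_subtype N (I ^ m) (I ^ (m + 1))),
    fun p ν => congrArg Subtype.val (he (p ⊗ₜ ν))⟩

/-- Let `B → A` be a homomorphism of commutative rings, `I ⊆ A` an ideal, and `M` an `A`-module.
If `M` is flat over `B` and each quotient `I^m M / I^{m+1} M` is flat over `B`, then for every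
`B`-module `N` and every `m ≥ 0` the natural map
`(I^m M / I^{m+1} M) ⊗_B N → I^m (M ⊗_B N) / I^{m+1} (M ⊗_B N)`, sending the class of `p ⊗ ν`
(for `p ∈ I^m M`) to the class of `p ⊗ ν`, is an isomorphism of `B`-modules.  Here the target
`I^m (M ⊗_B N) / I^{m+1} (M ⊗_B N)` is realized as the image of `I^m (M ⊗_B N)` in
`(M ⊗_B N) / I^{m+1} (M ⊗_B N)`, and the isomorphism is expressed as the existence of a
`B`-linear equivalence `e` compatible with the natural map on the generators
`(class of p) ⊗ ν`. -/
theorem statement_4 (B A : Type*) [CommRing B] [CommRing A] [Algebra B A]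
    (I : Ideal A) (M : Type*) [AddCommGroup M] [Module A M] [Module B M]
    [IsScalarTower B A M]
    (hM : Module.Flat B M)
    (hgr : ∀ m : ℕ, Module.Flat B
      (↥(I ^ m • (⊤ : Submodule A M)) ⧸
        Submodule.comap (I ^ m • (⊤ : Submodule A M)).subtype
          (I ^ (m + 1) • (⊤ : Submodule A M))))
    (N : Type*) [AddCommGroup N] [Module B N] (m : ℕ) :
    ∃ e : ((↥(I ^ m • (⊤ : Submodule A M)) ⧸
          Submodule.comap (I ^ m • (⊤ : Submodule A M)).subtype
            (I ^ (m + 1) • (⊤ : Submodule A M))) ⊗[B] N) ≃ₗ[B]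
        ↥(Submodule.map (I ^ (m + 1) • (⊤ : Submodule A (M ⊗[B] N))).mkQ
            (I ^ m • (⊤ : Submodule A (M ⊗[B] N)))),
      ∀ (p : ↥(I ^ m • (⊤ : Submodule A M))) (ν : N),
        (↑(e ((Submodule.Quotient.mk p) ⊗ₜ[B] ν)) :
            (M ⊗[B] N) ⧸ I ^ (m + 1) • (⊤ : Submodule A (M ⊗[B] N))) =
          (I ^ (m + 1) • (⊤ : Submodule A (M ⊗[B] N))).mkQ ((↑p : M) ⊗ₜ[B] ν) :=
  statement_4_general B A I M hgr N m
end
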